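/- The generalized Bell numbers B_{2,2}(n) := ∑_k S_{2,2}(n,k) satisfy the Dobiński-type formula B_{2,2}(n) = e^{-1} · ∑_{ℓ=2}^{∞} [ℓ(ℓ-1)]^n / ℓ! for n ≥ 1. -/

import Mathlib

/-!
On monomials both sides of the normal ordering act diagonally: `(X²D²)ⁿ xᵐ = (m(m-1))ⁿ xᵐ` and
`XᵏDᵏ xᵐ = m(m-1)⋯(m-k+1) xᵐ`, so `(m(m-1))ⁿ = ∑ₖ S(n,k) m^{(k)}` with falling factorials.
Dividing by `m!` and summing over `m`, every falling factorial contributes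
`∑ₘ m^{(k)} / m! = e`, whence `∑ₘ (m(m-1))ⁿ / m! = e · ∑ₖ S(n,k)`; for `n ≥ 1` the terms
`m = 0, 1` vanish.
-/

/-- The differentiation operator `D` on `ℝ[x]`. -/
noncomputable def Dop : Module.End ℝ (Polynomial ℝ) := Polynomial.derivative

/-- The operator `X` of multiplication by `x` on `ℝ[x]`. -/
noncomputable def Xop : Module.End ℝ (Polynomial ℝ) := LinearMap.mulLeft ℝ (Polynomial.X)

open Polynomial
open scoped Nat

lemma Xop_pow_mul_Dop_pow_apply_X_pow (k m : ℕ) :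
    (Xop ^ k * Dop ^ k) ((X : ℝ[X]) ^ m) = (m.descFactorial k : ℝ) • (X : ℝ[X]) ^ m := by
  have hD : (Dop ^ k) ((X : ℝ[X]) ^ m) = (m.descFactorial k : ℝ) • (X : ℝ[X]) ^ (m - k) := by
    rw [Dop, Module.End.pow_apply]
    exact iterate_derivative_X_pow_eq_smul m k
  rw [Module.End.mul_apply, hD, Xop, LinearMap.pow_mulLeft, LinearMap.mulLeft_apply,
    mul_smul_comm, ← pow_add]
  rcases le_or_gt k m with h | h
  · rw [Nat.add_sub_cancel' h]
  · simp [Nat.descFactorial_eq_zero_iff_lt.2 h]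

lemma Xop_sq_mul_Dop_sq_pow_apply_X_pow (n m : ℕ) :
    ((Xop ^ 2 * Dop ^ 2) ^ n) ((X : ℝ[X]) ^ m) = (m.descFactorial 2 : ℝ) ^ n • (X : ℝ[X]) ^ m := by
  induction n with
  | zero => simp
  | succ n ih =>
    rw [pow_succ, Module.End.mul_apply, Xop_pow_mul_Dop_pow_apply_X_pow, map_smul, ih, smul_smul,
      ← pow_succ']

lemma descFactorial_two_pow_eq_sum {S : ℕ → ℕ → ℝ} {n : ℕ}
    (hS : (Xop ^ 2 * Dop ^ 2) ^ n =
      ∑ k ∈ Finset.range (2 * n + 1), S n k • (Xop ^ k * Dop ^ k)) (m : ℕ) :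
    (m.descFactorial 2 : ℝ) ^ n = ∑ k ∈ Finset.range (2 * n + 1), S n k * m.descFactorial k := by
  have h := congrArg (fun T : Module.End ℝ ℝ[X] => (T ((X : ℝ[X]) ^ m)).coeff m) hS
  simpa only [Xop_sq_mul_Dop_sq_pow_apply_X_pow, LinearMap.sum_apply, LinearMap.smul_apply,
    Xop_pow_mul_Dop_pow_apply_X_pow, finsetSum_coeff, coeff_smul, coeff_X_pow_self,
    smul_eq_mul, mul_one] using h

lemma hasSum_descFactorial_mul_pow_div_factorial (k : ℕ) (x : ℝ) :
    HasSum (fun m : ℕ => m.descFactorial k * x ^ m / m !) (x ^ k * Real.exp x) := by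
  have hlow : ∑ m ∈ Finset.range k, (m.descFactorial k * x ^ m / m ! : ℝ) = 0 :=
    Finset.sum_eq_zero fun m hm => by
      simp [Nat.descFactorial_eq_zero_iff_lt.2 (Finset.mem_range.1 hm)]
  have hshift : ∀ i : ℕ, ((i + k).descFactorial k * x ^ (i + k) / (i + k) ! : ℝ)
      = x ^ k * (x ^ i / i !) := by
    intro i
    have h := Nat.factorial_mul_descFactorial (Nat.le_add_left k i)
    rw [Nat.add_sub_cancel] at h
    rw [← h, pow_add]
    push_cast
    field_simp
  rw [← hasSum_nat_add_iff' k, hlow, sub_zero, funext hshift, Real.exp_eq_exp_ℝ]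
  exact (NormedSpace.expSeries_div_hasSum_exp x).mul_left _

/-- **Dobiński-type formula for the generalized Bell numbers.** If `S n k` are the
coefficients in the normal ordering `(X²D²)^n = ∑_k S(n,k) X^k D^k` of operators on
polynomials, then the generalized Bell numbers `B_{2,2}(n) = ∑_k S(n,k)` satisfy, for
`n ≥ 1`, `B_{2,2}(n) = e⁻¹ · ∑_{ℓ=2}^{∞} [ℓ(ℓ-1)]^n / ℓ!`. -/
theorem generalized_bell_dobinski (S : ℕ → ℕ → ℝ)
    (hS : ∀ n : ℕ, (Xop ^ 2 * Dop ^ 2) ^ n =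
      ∑ k ∈ Finset.range (2 * n + 1), S n k • (Xop ^ k * Dop ^ k))
    (n : ℕ) (hn : 1 ≤ n) :
    ∑ k ∈ Finset.range (2 * n + 1), S n k =
      Real.exp (-1) *
        ∑' ℓ : ℕ, (((ℓ : ℝ) + 2) * ((ℓ : ℝ) + 1)) ^ n / (Nat.factorial (ℓ + 2) : ℝ) := by
  set f : ℕ → ℝ := fun m => (m.descFactorial 2 : ℝ) ^ n / (m ! : ℝ)
  have hf : HasSum f ((∑ k ∈ Finset.range (2 * n + 1), S n k) * Real.exp 1) := by
    simp only [f, descFactorial_two_pow_eq_sum (hS n), Finset.sum_div, Finset.sum_mul]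
    refine hasSum_sum fun k _ => ?_
    simpa [mul_div_assoc] using (hasSum_descFactorial_mul_pow_div_factorial k 1).mul_left (S n k)
  have hf01 : ∑ m ∈ Finset.range 2, f m = 0 := by
    simp [f, Finset.sum_range_succ, zero_pow (by omega : n ≠ 0)]
  have hshift : ∀ ℓ : ℕ, f (ℓ + 2) = (((ℓ : ℝ) + 2) * ((ℓ : ℝ) + 1)) ^ n / (ℓ + 2) ! := by
    intro ℓ
    simp only [f, Nat.descFactorial, Nat.cast_mul]
    push_cast
    ring
  rw [← funext hshift, ((hasSum_nat_add_iff' 2).2 hf).tsum_eq, hf01, sub_zero, mul_left_comm,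
    ← Real.exp_add]
  simp
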